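/- arXiv:1905.10507 — 4 statements merged into one kernel-verified Lean document; each statement's English description precedes it below -/
import Mathlib

section
/- Let C be an S×S real matrix that is essentially non-negative (all off-diagonal entries are ≥ 0) and irreducible. Then there exists a unique (up to positive scalar multiple) positive diagonal matrix D = diag(d_1,...,d_S) such that all column sums of D C D⁻¹ are equal, and this common column sum equals the largest real eigenvalue (Perron eigenvalue) of C. -/
open Matrix BigOperators

namespace Stmt0Aux

variable {n : ℕ}

lemma pow_entry_nonneg (A : Matrix (Fin n) (Fin n) ℝ) (hA : ∀ i j, 0 ≤ A i j) :
    ∀ (k : ℕ) (i j : Fin n), 0 ≤ (A ^ k) i j := by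
  intro k
  induction k with
  | zero =>
    intro i j
    simp only [pow_zero, Matrix.one_apply]
    split <;> norm_num
  | succ k ih =>
    intro i j
    rw [pow_succ, Matrix.mul_apply]
    exact Finset.sum_nonneg fun l _ => mul_nonneg (ih i l) (hA l j)

lemma exists_pow_pos (A : Matrix (Fin n) (Fin n) ℝ) (hA : ∀ i j, 0 ≤ A i j)
    (hd : ∀ i, 0 < A i i)
    (hconn : ∀ i j, Relation.ReflTransGen (fun a b => 0 < A a b) i j) :
    ∃ K, ∀ i j, 0 < (A ^ K) i j := by
  have mono : ∀ (i j : Fin n) (k : ℕ), 0 < (A ^ k) i j → 0 < (A ^ (k+1)) i j := by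
    intro i j k h
    rw [pow_succ, Matrix.mul_apply]
    refine Finset.sum_pos' (fun l _ => mul_nonneg (pow_entry_nonneg A hA k i l) (hA l j)) ?_
    exact ⟨j, Finset.mem_univ j, mul_pos h (hd j)⟩
  have mono' : ∀ (i j : Fin n) (k K : ℕ), k ≤ K → 0 < (A ^ k) i j → 0 < (A ^ K) i j := by
    intro i j k K hkK h
    induction K, hkK using Nat.le_induction with
    | base => exact h
    | succ K hK ih => exact mono i j K ih
  have hex : ∀ i j : Fin n, ∃ k, 0 < (A ^ k) i j := by
    intro i j
    induction hconn i j with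
    | refl => exact ⟨0, by simp⟩
    | @tail b c hab hbc ih =>
      obtain ⟨k, hk⟩ := ih
      refine ⟨k + 1, ?_⟩
      rw [pow_succ, Matrix.mul_apply]
      refine Finset.sum_pos' (fun l _ => mul_nonneg (pow_entry_nonneg A hA k i l) (hA l c)) ?_
      exact ⟨b, Finset.mem_univ b, mul_pos hk hbc⟩
  choose kf hkf using hex
  refine ⟨Finset.univ.sup fun p : Fin n × Fin n => kf p.1 p.2, fun i j => ?_⟩
  exact mono' i j (kf i j) _ (Finset.le_sup (f := fun p : Fin n × Fin n => kf p.1 p.2)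
    (Finset.mem_univ (i, j))) (hkf i j)

lemma mulVec_pow_eigen (A : Matrix (Fin n) (Fin n) ℝ) (r : ℝ) (z : Fin n → ℝ)
    (h : A.mulVec z = r • z) (k : ℕ) : (A ^ k).mulVec z = r ^ k • z := by
  induction k with
  | zero => simp
  | succ k ih =>
    rw [pow_succ', ← Matrix.mulVec_mulVec, ih, Matrix.mulVec_smul, h, smul_smul, pow_succ']
    ring_nf

lemma pairing (A : Matrix (Fin n) (Fin n) ℝ) (v w : Fin n → ℝ) :
    ∑ k, w k * A.mulVec v k = ∑ l, Aᵀ.mulVec w l * v l := by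
  simp only [Matrix.mulVec, dotProduct, Matrix.transpose_apply, Finset.mul_sum,
    Finset.sum_mul]
  rw [Finset.sum_comm]
  exact Finset.sum_congr rfl fun l _ => Finset.sum_congr rfl fun k _ => by ring

lemma perron (hn : 0 < n) (A : Matrix (Fin n) (Fin n) ℝ) (hA : ∀ i j, 0 ≤ A i j)
    (K : ℕ) (hK : ∀ i j, 0 < (A ^ K) i j) :
    ∃ r : ℝ, ∃ v : Fin n → ℝ, (∀ k, 0 < v k) ∧ A.mulVec v = r • v ∧
      ∀ (x : Fin n → ℝ) (ρ : ℝ), (∀ k, 0 ≤ x k) → x ≠ 0 →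
        (∀ k, ρ * x k ≤ A.mulVec x k) → ρ ≤ r := by
  haveI : Nonempty (Fin n) := ⟨⟨0, hn⟩⟩
  set M : ℝ := ∑ k, ∑ l, A k l with hM
  have hM0 : 0 ≤ M := Finset.sum_nonneg fun k _ => Finset.sum_nonneg fun l _ => hA k l
  set T : Set (ℝ × (Fin n → ℝ)) := {p | p.1 ∈ Set.Icc 0 M ∧ (∀ k, p.2 k ∈ Set.Icc (0:ℝ) 1) ∧
    (∑ k, p.2 k) = 1 ∧ ∀ k, p.1 * p.2 k ≤ A.mulVec p.2 k} with hT
  have hmv : ∀ k : Fin n, (fun p : ℝ × (Fin n → ℝ) => A.mulVec p.2 k) =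
      fun p : ℝ × (Fin n → ℝ) => ∑ l, A k l * p.2 l := by
    intro k; funext p; simp [Matrix.mulVec, dotProduct]
  have hcont : ∀ k : Fin n, Continuous fun p : ℝ × (Fin n → ℝ) => A.mulVec p.2 k := by
    intro k
    rw [hmv k]
    exact continuous_finset_sum _ fun l _ =>
      continuous_const.mul ((continuous_apply l).comp continuous_snd)
  have hc2 : ∀ k : Fin n, Continuous fun p : ℝ × (Fin n → ℝ) => p.2 k :=
    fun k => (continuous_apply k).comp continuous_snd
  have hTclosed : IsClosed T := by
    have e : T = (Prod.fst ⁻¹' Set.Icc (0:ℝ) M) ∩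
        ((⋂ k, {p : ℝ × (Fin n → ℝ) | p.2 k ∈ Set.Icc (0:ℝ) 1}) ∩
         ({p : ℝ × (Fin n → ℝ) | (∑ k, p.2 k) = 1} ∩
          ⋂ k, {p : ℝ × (Fin n → ℝ) | p.1 * p.2 k ≤ A.mulVec p.2 k})) := by
      ext p
      simp only [hT, Set.mem_setOf_eq, Set.mem_inter_iff, Set.mem_preimage, Set.mem_iInter]
    rw [e]
    refine (isClosed_Icc.preimage continuous_fst).inter (IsClosed.inter ?_ (IsClosed.inter ?_ ?_))
    · exact isClosed_iInter fun k => isClosed_Icc.preimage (hc2 k)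
    · exact isClosed_eq (continuous_finset_sum _ fun k _ => hc2 k) continuous_const
    · exact isClosed_iInter fun k => isClosed_le (continuous_fst.mul (hc2 k)) (hcont k)
  have hTsub : T ⊆ Set.Icc (0, fun _ => 0) (M, fun _ => 1) := by
    rintro ⟨ρ, x⟩ ⟨h1, h2, -, -⟩
    constructor
    · exact ⟨h1.1, fun k => (h2 k).1⟩
    · exact ⟨h1.2, fun k => (h2 k).2⟩
  have hTcomp : IsCompact T := (isCompact_Icc).of_isClosed_subset hTclosed hTsub
  have hp0 : ((0:ℝ), fun _ : Fin n => (n:ℝ)⁻¹) ∈ T := by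
    have hn' : (0:ℝ) < n := by exact_mod_cast hn
    refine ⟨⟨le_refl 0, hM0⟩, fun k => ⟨by positivity, ?_⟩, ?_, fun k => ?_⟩
    · rw [inv_le_one_iff₀]; right; exact_mod_cast hn
    · simp only [Finset.sum_const, Finset.card_univ, Fintype.card_fin, nsmul_eq_mul]
      field_simp
    · simp only [zero_mul, Matrix.mulVec, dotProduct]
      exact Finset.sum_nonneg fun l _ => mul_nonneg (hA k l) (by positivity)
  set S : Set ℝ := Prod.fst '' T with hS
  have hScomp : IsCompact S := hTcomp.image continuous_fst
  have hSne : S.Nonempty := ⟨0, _, hp0, rfl⟩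
  set r : ℝ := sSup S with hr
  have hS0 : (0:ℝ) ∈ S := ⟨_, hp0, rfl⟩
  have hCW : ∀ (x : Fin n → ℝ) (ρ : ℝ), (∀ k, 0 ≤ x k) → x ≠ 0 →
      (∀ k, ρ * x k ≤ A.mulVec x k) → ρ ≤ r := by
    intro x ρ hx hx0 hρ
    rcases le_or_gt ρ 0 with h | h
    · exact h.trans (le_csSup hScomp.bddAbove hS0)
    · have hxk : ∃ k, 0 < x k := by
        by_contra hc
        push_neg at hc
        exact hx0 (funext fun k => le_antisymm (hc k) (hx k))
      obtain ⟨k₀, hk₀⟩ := hxk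
      have hs : 0 < ∑ k, x k :=
        Finset.sum_pos' (fun k _ => hx k) ⟨k₀, Finset.mem_univ k₀, hk₀⟩
      set s := ∑ k, x k with hsd
      set x' : Fin n → ℝ := s⁻¹ • x with hx'
      have hx'k : ∀ k, 0 ≤ x' k := fun k => mul_nonneg (inv_nonneg.2 hs.le) (hx k)
      have hx'sum : ∑ k, x' k = 1 := by
        simp only [hx', Pi.smul_apply, smul_eq_mul, ← Finset.mul_sum]
        field_simp
        exact hsd.symm
      have hx'le : ∀ k, x' k ≤ 1 := by
        intro k
        have : x k ≤ s := Finset.single_le_sum (fun l _ => hx l) (Finset.mem_univ k)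
        simp only [hx', Pi.smul_apply, smul_eq_mul]
        rw [inv_mul_le_one₀ hs]; linarith
      have hAx' : ∀ k, ρ * x' k ≤ A.mulVec x' k := by
        intro k
        have := hρ k
        simp only [hx', Matrix.mulVec_smul, Pi.smul_apply, smul_eq_mul]
        calc ρ * (s⁻¹ * x k) = s⁻¹ * (ρ * x k) := by ring
          _ ≤ s⁻¹ * A.mulVec x k := by
            exact mul_le_mul_of_nonneg_left (hρ k) (inv_nonneg.2 hs.le)
      have hρM : ρ ≤ M := by
        have h1 : ρ = ∑ k, ρ * x' k := by
          rw [← Finset.mul_sum, hx'sum, mul_one]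
        have h2 : ∑ k, ρ * x' k ≤ ∑ k, A.mulVec x' k :=
          Finset.sum_le_sum fun k _ => hAx' k
        have h3 : ∑ k, A.mulVec x' k ≤ M := by
          rw [hM]
          refine Finset.sum_le_sum fun k _ => ?_
          have : A.mulVec x' k = ∑ l, A k l * x' l := by
            simp [Matrix.mulVec, dotProduct]
          rw [this]
          refine Finset.sum_le_sum fun l _ => ?_
          calc A k l * x' l ≤ A k l * 1 :=
              mul_le_mul_of_nonneg_left (hx'le l) (hA k l)
            _ = A k l := mul_one _
        linarith
      have : ρ ∈ S := ⟨(ρ, x'), ⟨⟨h.le, hρM⟩, fun k => ⟨hx'k k, hx'le k⟩, hx'sum, hAx'⟩, rfl⟩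
      exact le_csSup hScomp.bddAbove this
  have hrS : r ∈ S := hScomp.sSup_mem hSne
  obtain ⟨⟨ρ₁, x⟩, hxT, hfst⟩ := hrS
  simp only at hfst
  subst hfst
  obtain ⟨-, hxIcc, hxsum, hxA⟩ := hxT
  have hx0 : x ≠ 0 := by
    intro hc
    rw [hc] at hxsum
    simp at hxsum
  have hxnn : ∀ k, 0 ≤ x k := fun k => (hxIcc k).1
  set B : Matrix (Fin n) (Fin n) ℝ := A ^ K with hB
  have hBpos : ∀ i j, 0 < B i j := hK
  have hmvpos : ∀ z : Fin n → ℝ, (∀ k, 0 ≤ z k) → z ≠ 0 → ∀ k, 0 < B.mulVec z k := by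
    intro z hz hz0 k
    have hzk : ∃ l, 0 < z l := by
      by_contra hc
      push_neg at hc
      exact hz0 (funext fun l => le_antisymm (hc l) (hz l))
    obtain ⟨l₀, hl₀⟩ := hzk
    have : B.mulVec z k = ∑ l, B k l * z l := by simp [Matrix.mulVec, dotProduct]
    rw [this]
    exact Finset.sum_pos' (fun l _ => mul_nonneg (hBpos k l).le (hz l))
      ⟨l₀, Finset.mem_univ l₀, mul_pos (hBpos k l₀) hl₀⟩
  set y : Fin n → ℝ := B.mulVec x with hy
  have hypos : ∀ k, 0 < y k := hmvpos x hxnn hx0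
  have hcomm : B * A = A * B := by
    rw [hB, ← pow_succ, ← pow_succ']
  have hBA : ∀ u : Fin n → ℝ, B.mulVec (A.mulVec u) = A.mulVec (B.mulVec u) := by
    intro u
    rw [Matrix.mulVec_mulVec, Matrix.mulVec_mulVec, hcomm]
  have heig : A.mulVec x = r • x := by
    by_contra hne
    set w : Fin n → ℝ := A.mulVec x - r • x with hw
    have hwnn : ∀ k, 0 ≤ w k := by
      intro k
      simp only [hw, Pi.sub_apply, Pi.smul_apply, smul_eq_mul, sub_nonneg]
      exact hxA k
    have hw0 : w ≠ 0 := fun hc => hne (by rwa [hw, sub_eq_zero] at hc)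
    set u : Fin n → ℝ := B.mulVec w with hu
    have hupos : ∀ k, 0 < u k := hmvpos w hwnn hw0
    have hAy : A.mulVec y = u + r • y := by
      rw [hy, ← hBA, hu, hw, Matrix.mulVec_sub, Matrix.mulVec_smul]
      abel
    set ε : ℝ := Finset.univ.inf' Finset.univ_nonempty fun k => u k / y k with hε
    have hεpos : 0 < ε := by
      rw [hε, Finset.lt_inf'_iff]
      exact fun k _ => div_pos (hupos k) (hypos k)
    have hry : ∀ k, (r + ε) * y k ≤ A.mulVec y k := by
      intro k
      have h1 : ε ≤ u k / y k := Finset.inf'_le _ (Finset.mem_univ k)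
      have h2 : ε * y k ≤ u k := (le_div_iff₀ (hypos k)).1 h1
      have : A.mulVec y k = u k + r * y k := by
        rw [hAy]; simp [smul_eq_mul]
      rw [this]; nlinarith
    have := hCW y (r + ε) (fun k => (hypos k).le)
      (fun hc => (hypos ⟨0, hn⟩).ne' (by rw [hc]; rfl)) hry
    linarith
  refine ⟨r, y, hypos, ?_, hCW⟩
  rw [hy, ← hBA, heig, Matrix.mulVec_smul]

lemma spectrum_iff_det (C : Matrix (Fin n) (Fin n) ℝ) (t : ℝ) :
    t ∈ spectrum ℝ C ↔ (t • (1 : Matrix (Fin n) (Fin n) ℝ) - C).det = 0 := by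
  rw [spectrum.mem_iff, Algebra.algebraMap_eq_smul_one]
  constructor
  · intro h
    by_contra hd
    exact h ((Matrix.isUnit_iff_isUnit_det _).2 (isUnit_iff_ne_zero.2 hd))
  · intro hd h
    exact isUnit_iff_ne_zero.1 ((Matrix.isUnit_iff_isUnit_det _).1 h) hd

lemma spectrum_iff_det_c (C : Matrix (Fin n) (Fin n) ℂ) (t : ℂ) :
    t ∈ spectrum ℂ C ↔ (t • (1 : Matrix (Fin n) (Fin n) ℂ) - C).det = 0 := by
  rw [spectrum.mem_iff, Algebra.algebraMap_eq_smul_one]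
  constructor
  · intro h
    by_contra hd
    exact h ((Matrix.isUnit_iff_isUnit_det _).2 (isUnit_iff_ne_zero.2 hd))
  · intro hd h
    exact isUnit_iff_ne_zero.1 ((Matrix.isUnit_iff_isUnit_det _).1 h) hd

lemma real_spec_to_complex (C : Matrix (Fin n) (Fin n) ℝ) (t : ℝ)
    (h : t ∈ spectrum ℝ C) :
    (t : ℂ) ∈ spectrum ℂ (C.map (algebraMap ℝ ℂ)) := by
  rw [spectrum_iff_det] at h
  rw [spectrum_iff_det_c]
  have e : (t : ℂ) • (1 : Matrix (Fin n) (Fin n) ℂ) - C.map (algebraMap ℝ ℂ) =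
      (algebraMap ℝ ℂ).mapMatrix (t • (1 : Matrix (Fin n) (Fin n) ℝ) - C) := by
    ext i j
    simp only [RingHom.mapMatrix_apply, Matrix.map_apply, Matrix.sub_apply, Matrix.smul_apply,
      Matrix.one_apply, smul_eq_mul, _root_.map_sub, _root_.map_mul]
    split <;> simp
  rw [e, ← RingHom.map_det, h, map_zero]

end Stmt0Aux

open Stmt0Aux in
/-- For an essentially non-negative irreducible `S × S` real matrix `C`,
there exists a positive diagonal matrix `D = diag d` (unique up to a positive scalar)
such that all column sums of `D C D⁻¹` are equal, and the common column sum is the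
Perron eigenvalue `λ₀` of `C` (the eigenvalue of maximal real part, which is real). -/
theorem stmt0 (S : ℕ) (hS : 0 < S) (C : Matrix (Fin S) (Fin S) ℝ)
    (hess : ∀ i j : Fin S, i ≠ j → 0 ≤ C i j)
    (hirr : ∀ i j : Fin S, Relation.ReflTransGen (fun a b => a ≠ b ∧ C a b ≠ 0) i j)
    (lam0 : ℝ)
    (hspec : lam0 ∈ spectrum ℝ C)
    (hmax : ∀ μ ∈ spectrum ℂ (C.map (algebraMap ℝ ℂ)), μ.re ≤ lam0) :
    ∃ d : Fin S → ℝ, (∀ k, 0 < d k) ∧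
      (∀ k, (∑ i, d i * C i k / d k) = lam0) ∧
      ∀ d' : Fin S → ℝ, (∀ k, 0 < d' k) →
        (∀ k k', (∑ i, d' i * C i k / d' k) = (∑ i, d' i * C i k' / d' k')) →
        ∃ c : ℝ, 0 < c ∧ ∀ k, d' k = c * d k := by
  haveI : Nonempty (Fin S) := ⟨⟨0, hS⟩⟩
  set m : ℝ := 1 + ∑ j, |C j j| with hm
  have hmpos : ∀ i, 0 < m + C i i := by
    intro i
    have h1 : |C i i| ≤ ∑ j, |C j j| :=
      Finset.single_le_sum (f := fun j => |C j j|) (fun j _ => abs_nonneg (C j j))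
        (Finset.mem_univ i)
    have h2 : -|C i i| ≤ C i i := neg_abs_le _
    rw [hm]; linarith
  set AT : Matrix (Fin S) (Fin S) ℝ := m • (1 : Matrix (Fin S) (Fin S) ℝ) + Cᵀ with hAT
  set AC : Matrix (Fin S) (Fin S) ℝ := m • (1 : Matrix (Fin S) (Fin S) ℝ) + C with hAC
  have hATapp : ∀ i j, AT i j = (if i = j then m else 0) + C j i := by
    intro i j
    simp [hAT, Matrix.add_apply, Matrix.smul_apply, Matrix.one_apply, Matrix.transpose_apply,
      smul_eq_mul, mul_ite, mul_one, mul_zero]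
  have hATnn : ∀ i j, 0 ≤ AT i j := by
    intro i j
    rw [hATapp]
    by_cases h : i = j
    · subst h; rw [if_pos rfl]; exact (hmpos i).le
    · rw [if_neg h, zero_add]; exact hess j i (fun hc => h hc.symm)
  have hATd : ∀ i, 0 < AT i i := by
    intro i; rw [hATapp, if_pos rfl]; exact hmpos i
  have hconnAT : ∀ i j, Relation.ReflTransGen (fun a b => 0 < AT a b) i j := by
    intro i j
    refine Relation.ReflTransGen.mono ?_ i j (hirr j i).swap
    rintro a b ⟨hne, hC⟩
    rw [hATapp, if_neg (fun hc => hne hc.symm), zero_add]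
    exact lt_of_le_of_ne (hess b a hne) (Ne.symm hC)
  obtain ⟨K, hK⟩ := exists_pow_pos AT hATnn hATd hconnAT
  have hACt : ATᵀ = AC := by
    rw [hAT, hAC, Matrix.transpose_add, Matrix.transpose_smul, Matrix.transpose_one,
      Matrix.transpose_transpose]
  have hACnn : ∀ i j, 0 ≤ AC i j := by
    intro i j
    rw [← hACt, Matrix.transpose_apply]
    exact hATnn j i
  have hKC : ∀ i j, 0 < (AC ^ K) i j := by
    intro i j
    rw [← hACt, ← Matrix.transpose_pow, Matrix.transpose_apply]
    exact hK j i
  obtain ⟨r, d, hdpos, hdeig, hCW_T⟩ := perron hS AT hATnn K hK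
  obtain ⟨r', w, hwpos, hweig, hCW_C⟩ := perron hS AC hACnn K hKC
  have hpair : ∀ (s : ℝ) (z : Fin S → ℝ), AT.mulVec z = s • z →
      (0 < ∑ k, w k * z k) → s = r' := by
    intro s z hz hpos
    have h1 : ∑ k, w k * AT.mulVec z k = s * ∑ k, w k * z k := by
      rw [hz, Finset.mul_sum]
      exact Finset.sum_congr rfl fun k _ => by simp [smul_eq_mul]; ring
    have h2 : ∑ k, w k * AT.mulVec z k = r' * ∑ k, w k * z k := by
      rw [pairing, hACt, hweig, Finset.mul_sum]
      exact Finset.sum_congr rfl fun l _ => by simp [smul_eq_mul]; ring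
    exact mul_right_cancel₀ (ne_of_gt hpos) (h1.symm.trans h2)
  have hsum_wd : 0 < ∑ k, w k * d k :=
    Finset.sum_pos (fun k _ => mul_pos (hwpos k) (hdpos k)) Finset.univ_nonempty
  have hrr' : r = r' := hpair r d hdeig hsum_wd
  have hCd : Cᵀ.mulVec d = (r - m) • d := by
    have h1 : AT.mulVec d = m • d + Cᵀ.mulVec d := by
      rw [hAT, Matrix.add_mulVec, Matrix.smul_mulVec, Matrix.one_mulVec]
    rw [h1] at hdeig
    have h2 : Cᵀ.mulVec d = r • d - m • d := by
      rw [← hdeig]; abel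
    rw [h2, ← sub_smul]
  -- lam0 + m ≤ r
  have hdet0 : (lam0 • (1 : Matrix (Fin S) (Fin S) ℝ) - C).det = 0 :=
    (spectrum_iff_det C lam0).1 hspec
  obtain ⟨u, hu0, huv⟩ := Matrix.exists_mulVec_eq_zero_iff.2 hdet0
  have hCu : C.mulVec u = lam0 • u := by
    rw [Matrix.sub_mulVec, Matrix.smul_mulVec, Matrix.one_mulVec, sub_eq_zero] at huv
    exact huv.symm
  have hACu : AC.mulVec u = (lam0 + m) • u := by
    rw [hAC, Matrix.add_mulVec, Matrix.smul_mulVec, Matrix.one_mulVec, hCu, ← add_smul,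
      add_comm]
  have hxa0 : (fun k => |u k|) ≠ 0 := by
    intro hc
    apply hu0
    funext k
    have := congrFun hc k
    simpa [abs_eq_zero] using this
  have hbound : ∀ k, |lam0 + m| * |u k| ≤ AC.mulVec (fun k => |u k|) k := by
    intro k
    have h1 : AC.mulVec u k = (lam0 + m) * u k := by
      rw [hACu]; simp [smul_eq_mul]
    calc |lam0 + m| * |u k| = |AC.mulVec u k| := by rw [h1, abs_mul]
      _ = |∑ l, AC k l * u l| := by simp [Matrix.mulVec, dotProduct]
      _ ≤ ∑ l, |AC k l * u l| := Finset.abs_sum_le_sum_abs _ _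
      _ = ∑ l, AC k l * |u l| :=
          Finset.sum_congr rfl fun l _ => by rw [abs_mul, abs_of_nonneg (hACnn k l)]
      _ = AC.mulVec (fun k => |u k|) k := by simp [Matrix.mulVec, dotProduct]
  have hla : |lam0 + m| ≤ r' :=
    hCW_C (fun k => |u k|) |lam0 + m| (fun k => abs_nonneg _) hxa0 hbound
  have hlam_le : lam0 ≤ r - m := by
    have h1 := le_abs_self (lam0 + m)
    rw [← hrr'] at hla
    linarith
  -- r - m ≤ lam0
  have hd0 : d ≠ 0 := by
    intro hc
    exact (hdpos ⟨0, hS⟩).ne' (by rw [hc]; rfl)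
  have hdetT : ((r - m) • (1 : Matrix (Fin S) (Fin S) ℝ) - Cᵀ).det = 0 := by
    rw [← Matrix.exists_mulVec_eq_zero_iff]
    refine ⟨d, hd0, ?_⟩
    rw [Matrix.sub_mulVec, Matrix.smul_mulVec, Matrix.one_mulVec, hCd, sub_self]
  have hdetC : ((r - m) • (1 : Matrix (Fin S) (Fin S) ℝ) - C).det = 0 := by
    rw [← Matrix.det_transpose, Matrix.transpose_sub, Matrix.transpose_smul,
      Matrix.transpose_one]
    exact hdetT
  have hspecl : (r - m) ∈ spectrum ℝ C := (spectrum_iff_det C _).2 hdetC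
  have hlam_ge : r - m ≤ lam0 := by
    have h := hmax ((r - m : ℝ) : ℂ) (real_spec_to_complex C _ hspecl)
    simpa using h
  have hlam_eq : r - m = lam0 := le_antisymm hlam_ge hlam_le
  have hsumCd : ∀ k, ∑ i, d i * C i k = (r - m) * d k := by
    intro k
    have h1 := congrFun hCd k
    simp only [Matrix.mulVec, dotProduct, Matrix.transpose_apply, Pi.smul_apply,
      smul_eq_mul] at h1
    rw [← h1]
    exact Finset.sum_congr rfl fun i _ => by ring
  have hcolsum : ∀ k, (∑ i, d i * C i k / d k) = lam0 := by
    intro k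
    rw [← Finset.sum_div, hsumCd k, hlam_eq, mul_div_assoc, div_self (hdpos k).ne', mul_one]
  refine ⟨d, hdpos, hcolsum, ?_⟩
  intro d' hd'pos hcol
  set μ : ℝ := ∑ i, d' i * C i ⟨0, hS⟩ / d' ⟨0, hS⟩ with hmu
  have hCd' : Cᵀ.mulVec d' = μ • d' := by
    funext k
    have h1 : (∑ i, d' i * C i k / d' k) = μ := hcol k ⟨0, hS⟩
    rw [← Finset.sum_div, div_eq_iff (hd'pos k).ne'] at h1
    simp only [Matrix.mulVec, dotProduct, Matrix.transpose_apply, Pi.smul_apply,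
      smul_eq_mul]
    rw [← h1]
    exact Finset.sum_congr rfl fun i _ => by ring
  have hATd' : AT.mulVec d' = (μ + m) • d' := by
    rw [hAT, Matrix.add_mulVec, Matrix.smul_mulVec, Matrix.one_mulVec, hCd', ← add_smul,
      add_comm]
  have hsum_wd' : 0 < ∑ k, w k * d' k :=
    Finset.sum_pos (fun k _ => mul_pos (hwpos k) (hd'pos k)) Finset.univ_nonempty
  have hμr : μ + m = r := (hpair (μ + m) d' hATd' hsum_wd').trans hrr'.symm
  have hATd'r : AT.mulVec d' = r • d' := by rw [hATd', hμr]
  obtain ⟨k₀, -, hk₀⟩ := Finset.exists_mem_eq_inf' (s := Finset.univ)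
    (H := Finset.univ_nonempty) (fun k => d' k / d k)
  set c : ℝ := Finset.univ.inf' Finset.univ_nonempty (fun k => d' k / d k) with hc
  have hcpos : 0 < c := by
    rw [hk₀]
    exact div_pos (hd'pos k₀) (hdpos k₀)
  set z : Fin S → ℝ := d' - c • d with hz
  have hznn : ∀ k, 0 ≤ z k := by
    intro k
    have h1 : c ≤ d' k / d k := Finset.inf'_le _ (Finset.mem_univ k)
    have h2 : c * d k ≤ d' k := (le_div_iff₀ (hdpos k)).1 h1
    simp only [hz, Pi.sub_apply, Pi.smul_apply, smul_eq_mul, sub_nonneg]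
    exact h2
  have hzk₀ : z k₀ = 0 := by
    have he : z k₀ = d' k₀ - c * d k₀ := rfl
    rw [he, hk₀, div_mul_cancel₀ _ (hdpos k₀).ne', sub_self]
  have hATz : AT.mulVec z = r • z := by
    rw [hz, Matrix.mulVec_sub, hATd'r, Matrix.mulVec_smul, hdeig, smul_smul, smul_sub,
      smul_smul, mul_comm]
  have hBz := mulVec_pow_eigen AT r z hATz K
  have hz0 : z = 0 := by
    by_contra hc0
    have hex : ∃ l, 0 < z l := by
      by_contra hcl
      push_neg at hcl
      exact hc0 (funext fun l => le_antisymm (hcl l) (hznn l))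
    obtain ⟨l₀, hl₀⟩ := hex
    have h1 : (AT ^ K).mulVec z k₀ = 0 := by
      rw [hBz]
      simp [hzk₀, smul_eq_mul]
    have h2 : 0 < (AT ^ K).mulVec z k₀ := by
      simp only [Matrix.mulVec, dotProduct]
      exact Finset.sum_pos' (fun l _ => mul_nonneg (hK k₀ l).le (hznn l))
        ⟨l₀, Finset.mem_univ l₀, mul_pos (hK k₀ l₀) hl₀⟩
    exact h2.ne' h1
  refine ⟨c, hcpos, fun k => ?_⟩
  have h1 := congrFun hz0 k
  simp only [hz, Pi.sub_apply, Pi.smul_apply, smul_eq_mul, Pi.zero_apply] at h1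
  linarith
end

section
/- Suppose w : [0,∞) → ℝ^S satisfies w'(t) = B(t) w(t), where each B(t) is essentially non-negative, and let h(t) = max over columns k of the column sum Σᵢ b_{ik}(t). Then for all t ≥ 0, ‖w(t)‖₁ ≤ exp(∫₀ᵗ h(τ) dτ) · ‖w(0)‖₁, where ‖·‖₁ is the l₁ norm. -/
open Matrix BigOperators Set Filter Topology Topology

/-- If `w' (t) = B(t) w(t)` with each `B(t)` essentially non-negative and
`h(t)` the maximal column sum of `B(t)`, then
`‖w(t)‖₁ ≤ exp (∫₀ᵗ h) * ‖w(0)‖₁` for all `t ≥ 0`. -/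
theorem stmt2 (S : ℕ) (B : ℝ → Matrix (Fin S) (Fin S) ℝ)
    (hBcont : ∀ i j : Fin S, Continuous fun t => B t i j)
    (hess : ∀ t, 0 ≤ t → ∀ i j : Fin S, i ≠ j → 0 ≤ B t i j)
    (h : ℝ → ℝ)
    (hh : ∀ t, IsGreatest (Set.range fun k => ∑ i, B t i k) (h t))
    (w : ℝ → Fin S → ℝ)
    (hw : ∀ t, 0 ≤ t → HasDerivAt w ((B t).mulVec (w t)) t) :
    ∀ t, 0 ≤ t →
      (∑ i, |w t i|) ≤ Real.exp (∫ τ in (0:ℝ)..t, h τ) * ∑ i, |w 0 i| := by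
  haveI hne : Nonempty (Fin S) := by
    obtain ⟨k, -⟩ := (hh 0).1
    exact ⟨k⟩
  have hcont : Continuous h := by
    have hval : h = fun t => Finset.univ.sup' Finset.univ_nonempty fun k => ∑ i, B t i k := by
      funext t
      refine le_antisymm ?_ (Finset.sup'_le _ _ fun k _ => (hh t).2 ⟨k, rfl⟩)
      obtain ⟨k, hk⟩ := (hh t).1
      rw [← hk]
      exact Finset.le_sup' (fun k => ∑ i, B t i k) (Finset.mem_univ k)
    rw [hval]
    refine continuous_iff_continuousAt.2 fun x => ?_
    exact ContinuousAt.finset_sup'_apply _ fun k _ =>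
      (continuous_finset_sum _ fun i _ => hBcont i k).continuousAt
  intro t₀ ht₀
  set f : ℝ → ℝ := fun x => ∑ i, |w x i| with hf_def
  set σ : ℝ → Fin S → ℝ := fun x i =>
    if 0 ≤ (if w x i = 0 then (B x).mulVec (w x) i else w x i) then 1 else -1 with hσ_def
  set f' : ℝ → ℝ := fun x => ∑ i, σ x i * (B x).mulVec (w x) i with hf'_def
  have hσ1 : ∀ x i, σ x i = 1 ∨ σ x i = -1 := by
    intro x i
    by_cases h0 : 0 ≤ (if w x i = 0 then (B x).mulVec (w x) i else w x i) <;>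
      simp [hσ_def, h0]
  have hσsq : ∀ x i, σ x i * σ x i = 1 := by
    intro x i; rcases hσ1 x i with h1 | h1 <;> rw [h1] <;> norm_num
  have hσw : ∀ x i, σ x i * w x i = |w x i| := by
    intro x i
    by_cases h0 : w x i = 0
    · simp [h0]
    rcases lt_or_gt_of_ne h0 with hlt | hgt
    · simp [hσ_def, h0, not_le.2 hlt, abs_of_neg hlt]
    · simp [hσ_def, h0, hgt.le, abs_of_pos hgt]
  have hσv : ∀ x i, w x i = 0 → σ x i * (B x).mulVec (w x) i = |(B x).mulVec (w x) i| := by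
    intro x i h0
    by_cases hv : 0 ≤ (B x).mulVec (w x) i
    · simp [hσ_def, h0, hv, abs_of_nonneg hv]
    · simp [hσ_def, h0, hv, abs_of_neg (not_le.1 hv)]
  have hC : (0:ℝ) ≤ f 0 := Finset.sum_nonneg fun i _ => abs_nonneg _
  have hfc : ContinuousOn f (Icc 0 t₀) := by
    intro x hx
    have hcw : ContinuousAt w x := (hw x hx.1).continuousAt
    exact (((continuous_finset_sum Finset.univ fun i _ =>
      continuous_abs.comp (continuous_apply i))).continuousAt.comp hcw).continuousWithinAt
  have hslope : ∀ x, 0 ≤ x → Tendsto (slope f x) (𝓝[>] x) (𝓝 (f' x)) := by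
    intro x hx
    have hdwi : ∀ i, HasDerivAt (fun t => w t i) ((B x).mulVec (w x) i) x :=
      hasDerivAt_pi.1 (hw x hx)
    have hmono : 𝓝[>] x ≤ 𝓝[≠] x :=
      nhdsWithin_mono x fun z hz => Set.mem_compl_singleton_iff.2 (ne_of_gt hz)
    have hcomp : ∀ i, Tendsto (fun z => slope (fun t => |w t i|) x z) (𝓝[>] x)
        (𝓝 (σ x i * (B x).mulVec (w x) i)) := by
      intro i
      by_cases h0 : w x i = 0
      · have h1 : Tendsto (slope (fun t => w t i) x) (𝓝[>] x)
            (𝓝 ((B x).mulVec (w x) i)) :=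
          (hasDerivAt_iff_tendsto_slope.1 (hdwi i)).mono_left hmono
        have h2 : Tendsto (fun z => |slope (fun t => w t i) x z|) (𝓝[>] x)
            (𝓝 |(B x).mulVec (w x) i|) := h1.abs
        rw [hσv x i h0]
        refine h2.congr' ?_
        filter_upwards [self_mem_nhdsWithin] with z hz
        have hz' : x < z := hz
        simp only [slope_def_field]
        rw [h0, abs_zero, sub_zero, sub_zero, abs_div, abs_of_pos (sub_pos.2 hz')]
      · have habs := (hasDerivAt_abs h0).comp x (hdwi i)
        have hsgn : ((SignType.sign (w x i) : ℝ)) = σ x i := by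
          rcases lt_or_gt_of_ne h0 with hlt | hgt
          · rw [sign_neg hlt]; simp [hσ_def, h0, not_le.2 hlt]
          · rw [sign_pos hgt]; simp [hσ_def, h0, hgt.le]
        rw [hsgn] at habs
        exact (hasDerivAt_iff_tendsto_slope.1 habs).mono_left hmono
    have hsum := tendsto_finset_sum (Finset.univ)
      (fun i (_ : i ∈ Finset.univ) => hcomp i)
    refine hsum.congr fun z => ?_
    simp only [hf'_def, hf_def, slope_def_field, ← Finset.sum_div, Finset.sum_sub_distrib]
  have hbound : ∀ x, 0 ≤ x → f' x ≤ h x * f x := by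
    intro x hx
    have hterm : ∀ k, (∑ i, σ x i * B x i k) * w x k ≤ h x * |w x k| := by
      intro k
      calc (∑ i, σ x i * B x i k) * w x k
          = ∑ i, σ x i * σ x k * B x i k * |w x k| := by
            rw [Finset.sum_mul]
            refine Finset.sum_congr rfl fun i _ => ?_
            rw [← hσw x k]
            rcases hσ1 x k with h1 | h1 <;> rw [h1] <;> ring
        _ ≤ ∑ i, B x i k * |w x k| := by
            refine Finset.sum_le_sum fun i _ => ?_
            rcases eq_or_ne i k with rfl | hik
            · exact le_of_eq (by rw [hσsq x i, one_mul])
            · have hb := hess x hx i k hik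
              have hle : σ x i * σ x k ≤ 1 := by
                rcases hσ1 x i with h1 | h1 <;> rcases hσ1 x k with h2 | h2 <;>
                  rw [h1, h2] <;> norm_num
              exact mul_le_mul_of_nonneg_right (mul_le_of_le_one_left hb hle) (abs_nonneg _)
        _ = (∑ i, B x i k) * |w x k| := by rw [Finset.sum_mul]
        _ ≤ h x * |w x k| :=
            mul_le_mul_of_nonneg_right ((hh x).2 ⟨k, rfl⟩) (abs_nonneg _)
    calc f' x = ∑ i, ∑ k, σ x i * (B x i k * w x k) := by
          simp only [hf'_def, Matrix.mulVec, dotProduct, Finset.mul_sum]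
      _ = ∑ k, (∑ i, σ x i * B x i k) * w x k := by
          rw [Finset.sum_comm]
          refine Finset.sum_congr rfl fun k _ => ?_
          rw [Finset.sum_mul]
          exact Finset.sum_congr rfl fun i _ => by ring
      _ ≤ ∑ k, h x * |w x k| := Finset.sum_le_sum fun k _ => hterm k
      _ = h x * f x := by rw [hf_def, ← Finset.mul_sum]
  have hI : IntervalIntegrable h MeasureTheory.volume 0 t₀ := hcont.intervalIntegrable _ _
  have key : ∀ ε : ℝ, 0 < ε →
      f t₀ ≤ Real.exp ((∫ τ in (0:ℝ)..t₀, h τ) + t₀ * ε) * (f 0 + ε) := by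
    intro ε hε
    set g : ℝ → ℝ := fun x => ∫ τ in (0:ℝ)..x, (h τ + ε) with hg_def
    have hg : ∀ x, HasDerivAt g (h x + ε) x := fun x =>
      ((hcont.add continuous_const).integral_hasStrictDerivAt 0 x).hasDerivAt
    have hBfun : ∀ x, HasDerivAt (fun x => Real.exp (g x) * (f 0 + ε))
        (Real.exp (g x) * (h x + ε) * (f 0 + ε)) x := fun x =>
      ((hg x).exp.mul_const _)
    have hg0 : g 0 = 0 := intervalIntegral.integral_same
    have ha : f 0 ≤ Real.exp (g 0) * (f 0 + ε) := by
      rw [hg0, Real.exp_zero, one_mul]; linarith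
    have hmain := image_le_of_liminf_slope_right_lt_deriv_boundary
      (f := f) (f' := f') (a := 0) (b := t₀) hfc
      (fun x hx r hr => (((hslope x hx.1).eventually_lt_const hr).frequently))
      ha hBfun
      (by
        intro x hx hfeq
        have h1 : f' x ≤ h x * f x := hbound x hx.1
        have hpos : 0 < Real.exp (g x) * (f 0 + ε) :=
          mul_pos (Real.exp_pos _) (by linarith)
        rw [hfeq] at h1
        calc f' x ≤ h x * (Real.exp (g x) * (f 0 + ε)) := h1
          _ < (h x + ε) * (Real.exp (g x) * (f 0 + ε)) := by nlinarith
          _ = Real.exp (g x) * (h x + ε) * (f 0 + ε) := by ring)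
    have ht := hmain (right_mem_Icc.2 ht₀)
    have hgt : g t₀ = (∫ τ in (0:ℝ)..t₀, h τ) + t₀ * ε := by
      simp only [hg_def]
      rw [intervalIntegral.integral_add hI intervalIntegrable_const,
        intervalIntegral.integral_const, smul_eq_mul, sub_zero]
    rwa [hgt] at ht
  have hlim : Tendsto (fun ε : ℝ => Real.exp ((∫ τ in (0:ℝ)..t₀, h τ) + t₀ * ε) * (f 0 + ε))
      (𝓝[>] 0) (𝓝 (Real.exp (∫ τ in (0:ℝ)..t₀, h τ) * f 0)) := by
    have hc : Continuous fun ε : ℝ =>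
        Real.exp ((∫ τ in (0:ℝ)..t₀, h τ) + t₀ * ε) * (f 0 + ε) := by fun_prop
    have := (hc.tendsto 0).mono_left (nhdsWithin_le_nhds (s := Ioi (0:ℝ)))
    simpa using this
  have hfin : f t₀ ≤ Real.exp (∫ τ in (0:ℝ)..t₀, h τ) * f 0 := by
    refine ge_of_tendsto hlim ?_
    filter_upwards [self_mem_nhdsWithin] with ε hε
    exact key ε hε
  simpa [hf_def] using hfin
end

section
/- Suppose w : [0,∞) → ℝ^S satisfies w'(t) = B(t) w(t) with w(0) having all non-negative coordinates, where each B(t) is essentially non-negative, and let h_*(t) = min over columns k of the column sum Σᵢ b_{ik}(t). Then for all t ≥ 0, w(t) has non-negative coordinates and ‖w(t)‖₁ ≥ exp(∫₀ᵗ h_*(τ) dτ) · ‖w(0)‖₁. -/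
open Matrix BigOperators

/-- If `w'(t) = B(t) w(t)` with `w(0) ≥ 0` and each `B(t)` essentially
non-negative, and `h_*(t)` is the minimal column sum of `B(t)`, then for all `t ≥ 0`
the vector `w(t)` is non-negative and `‖w(t)‖₁ ≥ exp (∫₀ᵗ h_*) * ‖w(0)‖₁`. -/
theorem stmt3 (S : ℕ) (B : ℝ → Matrix (Fin S) (Fin S) ℝ)
    (hBcont : ∀ i j : Fin S, Continuous fun t => B t i j)
    (hess : ∀ t, 0 ≤ t → ∀ i j : Fin S, i ≠ j → 0 ≤ B t i j)
    (hstar : ℝ → ℝ)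
    (hh : ∀ t, IsLeast (Set.range fun k => ∑ i, B t i k) (hstar t))
    (w : ℝ → Fin S → ℝ)
    (hw : ∀ t, 0 ≤ t → HasDerivAt w ((B t).mulVec (w t)) t)
    (hw0 : ∀ i, 0 ≤ w 0 i) :
    ∀ t, 0 ≤ t → (∀ i, 0 ≤ w t i) ∧
      Real.exp (∫ τ in (0:ℝ)..t, hstar τ) * (∑ i, |w 0 i|) ≤ ∑ i, |w t i| := by
  classical
  obtain ⟨k0, -⟩ := (hh 0).1
  haveI hne : Nonempty (Fin S) := ⟨k0⟩
  -- column sums are continuous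
  have hcol : ∀ k : Fin S, Continuous fun t => ∑ i, B t i k := fun k =>
    continuous_finset_sum _ fun i _ => hBcont i k
  -- hstar is the finite minimum, hence continuous
  have hstar_eq : ∀ t, hstar t =
      Finset.univ.inf' Finset.univ_nonempty (fun k => ∑ i, B t i k) := by
    intro t
    refine le_antisymm ?_ ?_
    · obtain ⟨k, -, hkeq⟩ :=
        Finset.exists_mem_eq_inf' (Finset.univ_nonempty) (fun k => ∑ i, B t i k)
      rw [hkeq]
      exact (hh t).2 ⟨k, rfl⟩
    · obtain ⟨k, hk⟩ := (hh t).1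
      calc Finset.univ.inf' Finset.univ_nonempty (fun k => ∑ i, B t i k)
          ≤ ∑ i, B t i k := Finset.inf'_le _ (Finset.mem_univ k)
        _ = hstar t := hk
  have hstar_cont : Continuous hstar := by
    have h1 : Continuous fun t =>
        Finset.univ.inf' Finset.univ_nonempty (fun k => ∑ i, B t i k) :=
      Continuous.finset_inf'_apply Finset.univ_nonempty (fun k _ => hcol k)
    exact (funext hstar_eq : hstar = _) ▸ h1
  -- coordinatewise derivatives and continuity
  have hwd : ∀ (i : Fin S) (t : ℝ), 0 ≤ t →
      HasDerivAt (fun s => w s i) ((B t).mulVec (w t) i) t := fun i t ht =>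
    hasDerivAt_pi.1 (hw t ht) i
  have hwC : ∀ (i : Fin S) (t : ℝ), 0 ≤ t → ContinuousAt (fun s => w s i) t :=
    fun i t ht => (hwd i t ht).continuousAt
  intro t0 ht0
  -- a bound on the matrix entries on [0, t0]
  have hFcont : Continuous fun t => ∑ i : Fin S, ∑ k : Fin S, |B t i k| := by
    refine continuous_finset_sum _ fun i _ => continuous_finset_sum _ fun k _ => ?_
    exact (hBcont i k).abs
  obtain ⟨s0, hs0, hs0max⟩ := (isCompact_Icc (a := (0:ℝ)) (b := t0)).exists_isMaxOn
    ⟨0, Set.left_mem_Icc.2 ht0⟩ hFcont.continuousOn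
  set K : ℝ := ∑ i : Fin S, ∑ k : Fin S, |B s0 i k| with hKdef
  have hKbound : ∀ t ∈ Set.Icc (0:ℝ) t0, ∀ j : Fin S, ∑ k, B t j k ≤ K := by
    intro t ht j
    calc ∑ k, B t j k ≤ ∑ k, |B t j k| :=
          Finset.sum_le_sum fun k _ => le_abs_self _
      _ ≤ ∑ i : Fin S, ∑ k : Fin S, |B t i k| := by
          refine Finset.single_le_sum (f := fun i => ∑ k : Fin S, |B t i k|) ?_
            (Finset.mem_univ j)
          intro i _
          exact Finset.sum_nonneg fun k _ => abs_nonneg _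
      _ ≤ K := hs0max ht
  set C : ℝ := K + 1 with hCdef
  -- the key positivity claim
  have key : ∀ ε : ℝ, 0 < ε → ∀ t ∈ Set.Icc (0:ℝ) t0, ∀ i,
      0 < w t i + ε * Real.exp (C * t) := by
    intro ε hε
    by_contra hcon
    push_neg at hcon
    obtain ⟨ta, hta, ia, hia⟩ := hcon
    set u : Fin S → ℝ → ℝ := fun i t => w t i + ε * Real.exp (C * t) with hudef
    set A : Set ℝ := ⋃ j : Fin S, (Set.Icc (0:ℝ) t0 ∩ (u j) ⁻¹' Set.Iic 0) with hAdef
    have hexpC : Continuous fun t : ℝ => ε * Real.exp (C * t) :=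
      continuous_const.mul (Real.continuous_exp.comp (continuous_const.mul continuous_id))
    have huCA : ∀ (j : Fin S) (t : ℝ), 0 ≤ t → ContinuousAt (u j) t := by
      intro j t ht
      exact (hwC j t ht).add hexpC.continuousAt
    have huC : ∀ j : Fin S, ContinuousOn (u j) (Set.Icc (0:ℝ) t0) := fun j t ht =>
      (huCA j t ht.1).continuousWithinAt
    have hAclosed : IsClosed A := by
      refine isClosed_iUnion_of_finite fun j => ?_
      exact (huC j).preimage_isClosed_of_isClosed isClosed_Icc isClosed_Iic
    have hAne : A.Nonempty := ⟨ta, Set.mem_iUnion.2 ⟨ia, hta, hia⟩⟩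
    have hAbdd : BddBelow A := by
      refine ⟨0, fun x hx => ?_⟩
      obtain ⟨j, hj⟩ := Set.mem_iUnion.1 hx
      exact hj.1.1
    set t1 : ℝ := sInf A with ht1def
    have ht1A : t1 ∈ A := hAclosed.csInf_mem hAne hAbdd
    obtain ⟨j, hj⟩ := Set.mem_iUnion.1 ht1A
    have ht1mem : t1 ∈ Set.Icc (0:ℝ) t0 := hj.1
    have hjle : u j t1 ≤ 0 := hj.2
    have ht1pos : 0 < t1 := by
      rcases lt_or_eq_of_le ht1mem.1 with h | h
      · exact h
      · exfalso
        rw [← h] at hjle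
        have h1 := hw0 j
        have h2 := Real.exp_pos (C * 0)
        simp only [hudef] at hjle
        nlinarith
    have hbefore : ∀ s, 0 ≤ s → s < t1 → ∀ i, 0 < u i s := by
      intro s hs hst i
      by_contra hcon2
      push_neg at hcon2
      have hsA : s ∈ A := Set.mem_iUnion.2 ⟨i, ⟨hs, le_trans hst.le ht1mem.2⟩, hcon2⟩
      exact absurd (csInf_le hAbdd hsA) (not_le.2 hst)
    -- all coordinates of u are nonnegative at t1 (limit from the left)
    have hge : ∀ i, 0 ≤ u i t1 := by
      intro i
      have htend : Filter.Tendsto (u i) (nhdsWithin t1 (Set.Iio t1)) (nhds (u i t1)) :=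
        ((huCA i t1 ht1mem.1)).tendsto.mono_left nhdsWithin_le_nhds
      refine ge_of_tendsto htend ?_
      filter_upwards [Ioo_mem_nhdsLT_of_mem (Set.mem_Ioc.2 ⟨ht1pos, le_refl t1⟩)] with s hs
      exact (hbefore s hs.1.le hs.2 i).le
    have hjeq : u j t1 = 0 := le_antisymm hjle (hge j)
    -- derivative of u j at t1
    set e : ℝ := Real.exp (C * t1) with hedef
    have hepos : 0 < e := Real.exp_pos _
    have hd : HasDerivAt (u j) ((B t1).mulVec (w t1) j + ε * (C * e)) t1 := by
      have h1 : HasDerivAt (fun t => ε * Real.exp (C * t)) (ε * (C * e)) t1 := by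
        have h2 : HasDerivAt (fun t : ℝ => C * t) C t1 := by
          simpa using (hasDerivAt_id t1).const_mul C
        have h3 := h2.exp
        have h4 := h3.const_mul ε
        simpa [hedef, mul_comm, mul_left_comm] using h4
      exact (hwd j t1 ht1mem.1).add h1
    -- the derivative is positive
    have hsum_u : 0 ≤ ∑ k, B t1 j k * u k t1 := by
      refine Finset.sum_nonneg fun k _ => ?_
      rcases eq_or_ne k j with rfl | hkj
      · rw [hjeq]; simp
      · exact mul_nonneg (hess t1 ht1mem.1 j k (Ne.symm hkj)) (hge k)
    have hmv : (B t1).mulVec (w t1) j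
        = (∑ k, B t1 j k * u k t1) - ε * e * ∑ k, B t1 j k := by
      have hwk : ∀ k, w t1 k = u k t1 - ε * e := fun k => by
        simp [hudef, hedef]
      simp only [Matrix.mulVec, dotProduct]
      calc ∑ k, B t1 j k * w t1 k
          = ∑ k, (B t1 j k * u k t1 - ε * e * B t1 j k) :=
            Finset.sum_congr rfl fun k _ => by rw [hwk k]; ring
        _ = _ := by rw [Finset.sum_sub_distrib, Finset.mul_sum]
    have hBK : ∑ k, B t1 j k ≤ K := hKbound t1 ht1mem j
    have hdpos : 0 < (B t1).mulVec (w t1) j + ε * (C * e) := by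
      rw [hmv, hCdef]
      have hb := mul_le_mul_of_nonneg_left hBK (le_of_lt (mul_pos hε hepos))
      nlinarith [mul_pos hε hepos, hsum_u]
    -- but the derivative from the left must be nonpositive: contradiction
    have hslope := hasDerivAt_iff_tendsto_slope.1 hd
    have hslope_pos : ∀ᶠ s in nhdsWithin t1 {t1}ᶜ,
        0 < slope (u j) t1 s := hslope.eventually (eventually_gt_nhds hdpos)
    have hslope_left : ∀ᶠ s in nhdsWithin t1 (Set.Iio t1),
        0 < slope (u j) t1 s :=
      hslope_pos.filter_mono (nhdsWithin_mono t1 fun x hx => ne_of_lt hx)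
    have hfin : ∀ᶠ s in nhdsWithin t1 (Set.Iio t1), False := by
      filter_upwards [hslope_left,
        Ioo_mem_nhdsLT_of_mem (Set.mem_Ioc.2 ⟨ht1pos, le_refl t1⟩)] with s hs1 hs2
      have hub : 0 < u j s := hbefore s hs2.1.le hs2.2 j
      rw [slope_def_field, hjeq] at hs1
      have hden : s - t1 < 0 := by linarith [hs2.2]
      rcases div_pos_iff.1 hs1 with ⟨h1, h2⟩ | ⟨h1, h2⟩
      · linarith
      · linarith
    obtain ⟨s, hF⟩ := hfin.exists
    exact hF

  -- nonnegativity of w on [0, t0]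
  have hnonneg : ∀ t ∈ Set.Icc (0:ℝ) t0, ∀ i, 0 ≤ w t i := by
    intro t ht i
    by_contra hcon
    push_neg at hcon
    have hεpos : 0 < (-w t i) / Real.exp (C * t) :=
      div_pos (by linarith) (Real.exp_pos _)
    have hk := key _ hεpos t ht i
    rw [div_mul_cancel₀ _ (ne_of_gt (Real.exp_pos (C * t)))] at hk
    linarith
  set y : ℝ → ℝ := fun t => ∑ i, w t i with hydef
  have hyd : ∀ t, 0 ≤ t → HasDerivAt y (∑ k, (∑ i, B t i k) * w t k) t := by
    intro t ht
    have h1 : HasDerivAt y (∑ i, (B t).mulVec (w t) i) t :=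
      HasDerivAt.fun_sum fun i _ => hwd i t ht
    convert h1 using 1
    simp only [Matrix.mulVec, dotProduct]
    rw [Finset.sum_comm]
    exact Finset.sum_congr rfl fun k _ => by rw [Finset.sum_mul]
  have hyC : ∀ t, 0 ≤ t → ContinuousAt y t := by
    intro t ht
    exact (continuous_finset_sum Finset.univ fun i _ =>
      continuous_apply i).continuousAt.comp (hw t ht).continuousAt
  set H : ℝ → ℝ := fun t => ∫ τ in (0:ℝ)..t, hstar τ with hHdef
  have hHd : ∀ t, HasDerivAt H (hstar t) t := fun t =>
    (hstar_cont.integral_hasStrictDerivAt 0 t).hasDerivAt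
  set g : ℝ → ℝ := fun t => Real.exp (-H t) * y t with hgdef
  have hgd : ∀ t, 0 ≤ t → HasDerivAt g
      (Real.exp (-H t) * (-hstar t) * y t
        + Real.exp (-H t) * ∑ k, (∑ i, B t i k) * w t k) t := by
    intro t ht
    exact ((hHd t).neg.exp).mul (hyd t ht)
  have hmono : MonotoneOn g (Set.Icc 0 t0) := by
    apply monotoneOn_of_deriv_nonneg (convex_Icc 0 t0)
    · intro t ht
      exact (((((hHd t).neg.exp).continuousAt).mul (hyC t ht.1))).continuousWithinAt
    · intro x hx
      rw [interior_Icc] at hx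
      exact (hgd x hx.1.le).differentiableAt.differentiableWithinAt
    · intro x hx
      rw [interior_Icc] at hx
      rw [(hgd x hx.1.le).deriv]
      have hsum : 0 ≤ ∑ k, ((∑ i, B x i k) - hstar x) * w x k := by
        refine Finset.sum_nonneg fun k _ => ?_
        exact mul_nonneg (sub_nonneg.2 ((hh x).2 ⟨k, rfl⟩))
          (hnonneg x ⟨hx.1.le, hx.2.le⟩ k)
      have hexpand : ∑ k, ((∑ i, B x i k) - hstar x) * w x k
          = (∑ k, (∑ i, B x i k) * w x k) - hstar x * y x := by
        rw [Finset.sum_congr rfl (fun k _ => sub_mul _ _ _),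
          Finset.sum_sub_distrib, Finset.mul_sum]
      rw [hexpand] at hsum
      have hmul := mul_nonneg (Real.exp_pos (-H x)).le hsum
      nlinarith [hmul]
  have hg01 : g 0 ≤ g t0 :=
    hmono (Set.left_mem_Icc.2 ht0) (Set.right_mem_Icc.2 ht0) ht0
  have hg0 : g 0 = y 0 := by
    simp [hgdef, hHdef, intervalIntegral.integral_same]
  refine ⟨fun i => hnonneg t0 (Set.right_mem_Icc.2 ht0) i, ?_⟩
  have habs0 : ∑ i, |w 0 i| = y 0 :=
    Finset.sum_congr rfl fun i _ => abs_of_nonneg (hw0 i)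
  have habst : ∑ i, |w t0 i| = y t0 :=
    Finset.sum_congr rfl fun i _ =>
      abs_of_nonneg (hnonneg t0 (Set.right_mem_Icc.2 ht0) i)
  rw [habs0, habst]
  have hHt0 : (∫ τ in (0:ℝ)..t0, hstar τ) = H t0 := rfl
  rw [hHt0]
  have h2 := mul_le_mul_of_nonneg_left hg01 (Real.exp_nonneg (H t0))
  rw [hg0, hgdef] at h2
  calc Real.exp (H t0) * y 0 ≤ Real.exp (H t0) * (Real.exp (-H t0) * y t0) := h2
    _ = y t0 := by rw [← mul_assoc, ← Real.exp_add]; simp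
end

section
/- Let X(t) be a homogeneous finite Markov chain on {0,...,S} with 'batch' births at rates a_k > 0 (rate of birth of a group of k, independent of state) satisfying a_{k+1} ≤ a_k with a_2 < a_1, and single deaths at positive rates μ_{i+1} > 0. Then the matrix B* = T B T⁻¹ is essentially non-negative and irreducible. -/
open Matrix BigOperators

namespace Stmt9Aux

noncomputable def Bn (S : ℕ) (a mu : ℕ → ℝ) (k l : ℕ) : ℝ :=
  (if l < k then a (k - l)
   else if l = k + 1 then mu (k + 2)
   else if l = k then -((∑ t ∈ Finset.Icc 1 (S - (k+1)), a t) + mu (k+1))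
   else 0) - a (k+1)

noncomputable def Gn (S : ℕ) (a mu : ℕ → ℝ) (j k : ℕ) : ℝ :=
  Bn S a mu k j - (if 1 ≤ j then Bn S a mu k (j-1) else 0)

noncomputable def Tinv (S : ℕ) : Matrix (Fin S) (Fin S) ℝ :=
  fun i j => (if i = j then (1:ℝ) else 0) - (if (j:ℕ) = (i:ℕ)+1 then 1 else 0)




lemma amono (a : ℕ → ℝ) (hamono : ∀ k, 1 ≤ k → a (k + 1) ≤ a k) :
    ∀ k l, 1 ≤ k → k ≤ l → a l ≤ a k := by
  intro k l hk hkl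
  induction l, hkl using Nat.le_induction with
  | base => exact le_refl _
  | succ n hn ih => exact le_trans (hamono n (le_trans hk hn)) ih

lemma G_tail (S : ℕ) (a mu : ℕ → ℝ) (j k : ℕ) (h : j + 1 ≤ k) :
    Gn S a mu j k = a (k - j) - a (k - j + 1) := by
  unfold Gn Bn
  rcases Nat.eq_zero_or_pos j with hj | hj
  · subst hj
    rw [if_neg (by omega : ¬ (1:ℕ) ≤ 0), if_pos (by omega : 0 < k)]
    simp only [Nat.sub_zero]
    ring
  · rw [if_pos (by omega : 1 ≤ j), if_pos (by omega : j < k), if_pos (by omega : j - 1 < k)]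
    have e1 : k - (j-1) = k - j + 1 := by omega
    rw [e1]; ring

lemma G_at_jm1 (S : ℕ) (a mu : ℕ → ℝ) (j : ℕ) (hj : 1 ≤ j) :
    Gn S a mu j (j-1) = mu (j+1) + (∑ t ∈ Finset.Icc 1 (S - j), a t) + mu j := by
  unfold Gn Bn
  rw [if_pos hj, if_neg (by omega : ¬ j < j - 1), if_pos (by omega : j = (j-1) + 1)]
  rw [if_neg (by omega : ¬ j - 1 < j - 1), if_neg (by omega : ¬ j - 1 = (j-1) + 1),
    if_pos rfl]
  have e1 : j - 1 + 2 = j + 1 := by omega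
  have e2 : S - (j - 1 + 1) = S - j := by omega
  have e3 : j - 1 + 1 = j := by omega
  rw [e1, e2, e3]; ring

lemma G_at_j (S : ℕ) (a mu : ℕ → ℝ) (j : ℕ) (hj : 1 ≤ j) :
    Gn S a mu j j = -(∑ t ∈ Finset.Icc 1 (S - (j+1)), a t) - mu (j+1) - a 1 := by
  unfold Gn Bn
  rw [if_pos hj, if_neg (by omega : ¬ j < j), if_neg (by omega : ¬ j = j + 1),
    if_pos rfl, if_pos (by omega : j - 1 < j)]
  have e1 : j - (j-1) = 1 := by omega
  rw [e1]; ring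

lemma G_at_jm2 (S : ℕ) (a mu : ℕ → ℝ) (j : ℕ) (hj : 2 ≤ j) :
    Gn S a mu j (j-2) = -mu j := by
  unfold Gn Bn
  rw [if_pos (by omega : 1 ≤ j), if_neg (by omega : ¬ j < j - 2),
    if_neg (by omega : ¬ j = (j-2) + 1), if_neg (by omega : ¬ j = j - 2),
    if_neg (by omega : ¬ j - 1 < j - 2), if_pos (by omega : j - 1 = (j-2) + 1)]
  have e1 : j - 2 + 2 = j := by omega
  rw [e1]; ring

lemma G_small (S : ℕ) (a mu : ℕ → ℝ) (j k : ℕ) (h : k + 3 ≤ j) :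
    Gn S a mu j k = 0 := by
  unfold Gn Bn
  rw [if_pos (by omega : 1 ≤ j), if_neg (by omega : ¬ j < k), if_neg (by omega : ¬ j = k + 1),
    if_neg (by omega : ¬ j = k), if_neg (by omega : ¬ j - 1 < k),
    if_neg (by omega : ¬ j - 1 = k + 1), if_neg (by omega : ¬ j - 1 = k)]
  ring




lemma telescope (S : ℕ) (a mu : ℕ → ℝ) (j i : ℕ) (hij : j + 1 ≤ i) (hiS : i ≤ S) :
    (∑ k ∈ Finset.Ico i S, Gn S a mu j k) = a (i - j) - a (S - j) := by
  have h1 : (∑ k ∈ Finset.Ico i S, Gn S a mu j k)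
      = ∑ k ∈ Finset.Ico i S, (a (k - j) - a (k + 1 - j)) := by
    refine Finset.sum_congr rfl fun k hk => ?_
    rw [Finset.mem_Ico] at hk
    rw [G_tail S a mu j k (by omega)]
    have e : k - j + 1 = k + 1 - j := by omega
    rw [e]
  rw [h1, Finset.sum_Ico_eq_sub _ hiS]
  have h2 : ∀ n : ℕ, (∑ k ∈ Finset.range n, (a (k - j) - a (k + 1 - j)))
      = a (0 - j) - a (n - j) := by
    intro n
    have := Finset.sum_range_sub' (f := fun k => a (k - j)) n
    simpa using this
  rw [h2, h2]
  ring

lemma sum_mid (S : ℕ) (a mu : ℕ → ℝ) (j : ℕ) (hj1 : 1 ≤ j) (hjS : j < S) :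
    (∑ k ∈ Finset.Ico (j-1) S, Gn S a mu j k) = mu j := by
  rw [Finset.sum_eq_sum_Ico_succ_bot (by omega : j - 1 < S)]
  have e1 : j - 1 + 1 = j := by omega
  rw [e1, Finset.sum_eq_sum_Ico_succ_bot (by omega : j < S)]
  rw [telescope S a mu j (j+1) (by omega) (by omega)]
  rw [G_at_jm1 S a mu j hj1, G_at_j S a mu j hj1]
  have e2 : j + 1 - j = 1 := by omega
  rw [e2]
  have e3 : S - j = (S - (j+1)) + 1 := by omega
  have e4 : (∑ t ∈ Finset.Icc 1 (S - j), a t)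
      = (∑ t ∈ Finset.Icc 1 (S - (j+1)), a t) + a (S - j) := by
    rw [e3, Finset.sum_Icc_succ_top (by omega : 1 ≤ S - (j+1) + 1)]
  rw [e4]
  ring

lemma sum_far (S : ℕ) (a mu : ℕ → ℝ) (i j : ℕ) (hij : i + 2 ≤ j) (hjS : j < S) :
    (∑ k ∈ Finset.Ico i S, Gn S a mu j k) = 0 := by
  rw [← Finset.sum_Ico_consecutive _ (by omega : i ≤ j - 1) (by omega : j - 1 ≤ S)]
  rw [sum_mid S a mu j (by omega) hjS]
  have h1 : (∑ k ∈ Finset.Ico i (j-1), Gn S a mu j k)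
      = ∑ k ∈ Finset.Ico i (j-1), (if k = j - 2 then -mu j else 0) := by
    refine Finset.sum_congr rfl fun k hk => ?_
    rw [Finset.mem_Ico] at hk
    by_cases h : k = j - 2
    · rw [if_pos h, h, G_at_jm2 S a mu j (by omega)]
    · rw [if_neg h, G_small S a mu j k (by omega)]
  rw [h1, Finset.sum_ite_eq' _ (j-2) (fun _ => -mu j)]
  rw [if_pos (by rw [Finset.mem_Ico]; omega)]
  ring



lemma sum_ite_val {S : ℕ} (m : ℕ) (f : Fin S → ℝ) :
    (∑ l : Fin S, if (l : ℕ) = m then f l else 0)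
      = if h : m < S then f ⟨m, h⟩ else 0 := by
  split_ifs with h
  · rw [Fintype.sum_eq_single (⟨m, h⟩ : Fin S)]
    · rw [if_pos rfl]
    · intro l hl
      rw [if_neg]
      intro hv
      exact hl (Fin.ext hv)
  · refine Finset.sum_eq_zero fun l _ => ?_
    rw [if_neg]
    intro hv
    have := l.2
    omega

lemma Tinv_eq (S : ℕ) (T : Matrix (Fin S) (Fin S) ℝ)
    (hT : ∀ i j : Fin S, T i j = if i ≤ j then 1 else 0) :
    T⁻¹ = Tinv S := by
  apply inv_eq_right_inv
  ext i j
  rw [Matrix.mul_apply, Matrix.one_apply]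
  have hs : ∀ k : Fin S, T i k * Tinv S k j
      = (if (k:ℕ) = (j:ℕ) then (if (i:ℕ) ≤ (j:ℕ) then (1:ℝ) else 0) else 0)
        - (if (k:ℕ) = (j:ℕ) - 1 ∧ 1 ≤ (j:ℕ) then (if (i:ℕ) ≤ (j:ℕ) - 1 then (1:ℝ) else 0)
            else 0) := by
    intro k
    rw [hT]
    show (if i ≤ k then (1:ℝ) else 0) *
        ((if k = j then (1:ℝ) else 0) - (if (j:ℕ) = (k:ℕ)+1 then 1 else 0)) = _
    by_cases h1 : k = j
    · subst h1
      have e1 : ¬ ((k:ℕ) = (k:ℕ) - 1 ∧ 1 ≤ (k:ℕ)) := by omega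
      rw [if_pos rfl, if_pos rfl, if_neg (by omega : ¬ (k:ℕ) = (k:ℕ)+1), if_neg e1]
      by_cases h2 : i ≤ k
      · rw [if_pos h2, if_pos (Fin.le_def.mp h2)]; ring
      · have e2 : ¬ (i:ℕ) ≤ (k:ℕ) := fun hc => h2 (Fin.le_def.mpr hc)
        rw [if_neg h2, if_neg e2]; ring
    · have e0 : ¬ (k:ℕ) = (j:ℕ) := fun hc => h1 (Fin.ext hc)
      rw [if_neg h1, if_neg e0]
      by_cases h2 : (j:ℕ) = (k:ℕ)+1
      · have e1 : (k:ℕ) = (j:ℕ) - 1 ∧ 1 ≤ (j:ℕ) := by omega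
        rw [if_pos h2, if_pos e1]
        by_cases h3 : i ≤ k
        · have e2 : (i:ℕ) ≤ (j:ℕ) - 1 := by have := Fin.le_def.mp h3; omega
          rw [if_pos h3, if_pos e2]; ring
        · have e2 : ¬ (i:ℕ) ≤ (j:ℕ) - 1 := by
            intro hc
            exact h3 (Fin.le_def.mpr (by omega))
          rw [if_neg h3, if_neg e2]; ring
      · have e1 : ¬ ((k:ℕ) = (j:ℕ) - 1 ∧ 1 ≤ (j:ℕ)) := by
          intro hc
          exact h2 (by omega)
        rw [if_neg h2, if_neg e1]; ring
  rw [Finset.sum_congr rfl fun k _ => hs k, Finset.sum_sub_distrib]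
  rw [sum_ite_val (j:ℕ) (fun _ => if (i:ℕ) ≤ (j:ℕ) then (1:ℝ) else 0), dif_pos j.2]
  by_cases hj : 1 ≤ (j:ℕ)
  · have h4 : ∀ k : Fin S,
        (if (k:ℕ) = (j:ℕ) - 1 ∧ 1 ≤ (j:ℕ) then (if (i:ℕ) ≤ (j:ℕ) - 1 then (1:ℝ) else 0) else 0)
        = (if (k:ℕ) = (j:ℕ) - 1 then (if (i:ℕ) ≤ (j:ℕ) - 1 then (1:ℝ) else 0) else 0) := by
      intro k
      by_cases h : (k:ℕ) = (j:ℕ) - 1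
      · rw [if_pos ⟨h, hj⟩, if_pos h]
      · rw [if_neg (fun hc => h hc.1), if_neg h]
    rw [Finset.sum_congr rfl fun k _ => h4 k,
      sum_ite_val ((j:ℕ)-1) (fun _ => if (i:ℕ) ≤ (j:ℕ) - 1 then (1:ℝ) else 0),
      dif_pos (by omega : (j:ℕ)-1 < S)]
    simp only [Fin.ext_iff]
    split_ifs <;> first | omega | norm_num
  · have h5 : (∑ k : Fin S,
        if (k:ℕ) = (j:ℕ) - 1 ∧ 1 ≤ (j:ℕ) then (if (i:ℕ) ≤ (j:ℕ) - 1 then (1:ℝ) else 0) else 0)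
        = 0 := Finset.sum_eq_zero fun k _ => if_neg (fun hc => hj hc.2)
    rw [h5]
    simp only [Fin.ext_iff]
    split_ifs <;> first | omega | norm_num



lemma B_eq_Bn (S : ℕ) (a mu : ℕ → ℝ)
    (A : Matrix (Fin (S+1)) (Fin (S+1)) ℝ)
    (hA : ∀ i j : Fin (S+1), A i j =
      if (j : ℕ) < (i : ℕ) then a ((i : ℕ) - (j : ℕ))
      else if (j : ℕ) = (i : ℕ) + 1 then mu (j : ℕ)
      else if i = j then
        -((∑ k ∈ Finset.Icc 1 (S - (i : ℕ)), a k) + (if (i : ℕ) = 0 then 0 else mu (i : ℕ)))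
      else 0)
    (B : Matrix (Fin S) (Fin S) ℝ)
    (hB : ∀ i j : Fin S, B i j = A i.succ j.succ - A i.succ 0) :
    ∀ k l : Fin S, B k l = Bn S a mu (k:ℕ) (l:ℕ) := by
  intro k l
  rw [hB, hA, hA]
  simp only [Fin.val_succ, Fin.val_zero, Fin.succ_inj, Fin.ext_iff, Nat.sub_zero]
  unfold Bn
  split_ifs <;>
    first
      | rfl
      | omega
      | (congr 1 <;> first | rfl | omega | (congr 1 <;> omega))
      | (exfalso; assumption)

lemma entry_formula (S : ℕ) (a mu : ℕ → ℝ)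
    (B T : Matrix (Fin S) (Fin S) ℝ)
    (hBn : ∀ k l : Fin S, B k l = Bn S a mu (k:ℕ) (l:ℕ))
    (hT : ∀ i j : Fin S, T i j = if i ≤ j then 1 else 0)
    (i j : Fin S) :
    (T * B * T⁻¹) i j = ∑ k ∈ Finset.Ico (i:ℕ) S, Gn S a mu (j:ℕ) k := by
  rw [Tinv_eq S T hT, Matrix.mul_assoc, Matrix.mul_apply]
  have hinner : ∀ k : Fin S, (B * Tinv S) k j = Gn S a mu (j:ℕ) (k:ℕ) := by
    intro k
    rw [Matrix.mul_apply]
    have hs : ∀ l : Fin S, B k l * Tinv S l j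
        = (if (l:ℕ) = (j:ℕ) then B k l else 0)
          - (if (l:ℕ) = (j:ℕ) - 1 ∧ 1 ≤ (j:ℕ) then B k l else 0) := by
      intro l
      show B k l * ((if l = j then (1:ℝ) else 0) - (if (j:ℕ) = (l:ℕ)+1 then 1 else 0)) = _
      by_cases h1 : l = j
      · subst h1
        have e1 : ¬ ((l:ℕ) = (l:ℕ) - 1 ∧ 1 ≤ (l:ℕ)) := by omega
        rw [if_pos rfl, if_pos rfl, if_neg (by omega : ¬ (l:ℕ) = (l:ℕ)+1), if_neg e1]
        ring
      · have e0 : ¬ (l:ℕ) = (j:ℕ) := fun hc => h1 (Fin.ext hc)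
        rw [if_neg h1, if_neg e0]
        by_cases h2 : (j:ℕ) = (l:ℕ)+1
        · have e1 : (l:ℕ) = (j:ℕ) - 1 ∧ 1 ≤ (j:ℕ) := by omega
          rw [if_pos h2, if_pos e1]; ring
        · have e1 : ¬ ((l:ℕ) = (j:ℕ) - 1 ∧ 1 ≤ (j:ℕ)) := by
            intro hc
            exact h2 (by omega)
          rw [if_neg h2, if_neg e1]; ring
    rw [Finset.sum_congr rfl fun l _ => hs l, Finset.sum_sub_distrib]
    rw [sum_ite_val (j:ℕ) (B k), dif_pos j.2]
    unfold Gn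
    by_cases hj : 1 ≤ (j:ℕ)
    · have h4 : ∀ l : Fin S,
          (if (l:ℕ) = (j:ℕ) - 1 ∧ 1 ≤ (j:ℕ) then B k l else 0)
          = (if (l:ℕ) = (j:ℕ) - 1 then B k l else 0) := by
        intro l
        by_cases h : (l:ℕ) = (j:ℕ) - 1
        · rw [if_pos ⟨h, hj⟩, if_pos h]
        · rw [if_neg (fun hc => h hc.1), if_neg h]
      rw [Finset.sum_congr rfl fun l _ => h4 l, sum_ite_val ((j:ℕ)-1) (B k),
        dif_pos (by omega : (j:ℕ)-1 < S), if_pos hj, hBn, hBn]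
    · have h5 : (∑ l : Fin S, if (l:ℕ) = (j:ℕ) - 1 ∧ 1 ≤ (j:ℕ) then B k l else 0) = 0 :=
        Finset.sum_eq_zero fun l _ => if_neg (fun hc => hj hc.2)
      rw [h5, if_neg hj, hBn]
  have hout : ∀ k : Fin S, T i k * (B * Tinv S) k j
      = (fun n => if (i:ℕ) ≤ n then Gn S a mu (j:ℕ) n else 0) (k:ℕ) := by
    intro k
    rw [hT, hinner]
    simp only
    by_cases h : i ≤ k
    · rw [if_pos h, one_mul, if_pos (Fin.le_def.mp h)]
    · rw [if_neg h, zero_mul, if_neg (fun hc => h (Fin.le_def.mpr hc))]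
  rw [Finset.sum_congr rfl fun k _ => hout k,
    Fin.sum_univ_eq_sum_range (fun n => if (i:ℕ) ≤ n then Gn S a mu (j:ℕ) n else 0) S]
  rw [Finset.range_eq_Ico, ← Finset.sum_Ico_consecutive _ (Nat.zero_le (i:ℕ)) (le_of_lt i.2)]
  have hz : (∑ n ∈ Finset.Ico 0 (i:ℕ),
      if (i:ℕ) ≤ n then Gn S a mu (j:ℕ) n else 0) = 0 := by
    refine Finset.sum_eq_zero fun n hn => ?_
    rw [Finset.mem_Ico] at hn
    rw [if_neg (by omega)]
  rw [hz, zero_add]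
  refine Finset.sum_congr rfl fun n hn => ?_
  rw [Finset.mem_Ico] at hn
  rw [if_pos hn.1]

end Stmt9Aux

set_option linter.unnecessarySeqFocus false

open Matrix BigOperators

/-- For a homogeneous chain on `{0,…,S}` with batch births at rates
`a_k > 0` (`a_{k+1} ≤ a_k`, `a_2 < a_1`) and single deaths at positive rates `μ_i > 0`,
the matrix `B* = T B T⁻¹` is essentially non-negative and irreducible (its directed
graph is strongly connected). -/
theorem stmt9 (S : ℕ) (hS : 0 < S) (a mu : ℕ → ℝ)
    (ha : ∀ k, 1 ≤ k → k ≤ S → 0 < a k)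
    (hamono : ∀ k, 1 ≤ k → a (k + 1) ≤ a k)
    (ha21 : a 2 < a 1)
    (hmu : ∀ i, 1 ≤ i → i ≤ S → 0 < mu i)
    (A : Matrix (Fin (S+1)) (Fin (S+1)) ℝ)
    (hA : ∀ i j : Fin (S+1), A i j =
      if (j : ℕ) < (i : ℕ) then a ((i : ℕ) - (j : ℕ))
      else if (j : ℕ) = (i : ℕ) + 1 then mu (j : ℕ)
      else if i = j then
        -((∑ k ∈ Finset.Icc 1 (S - (i : ℕ)), a k) + (if (i : ℕ) = 0 then 0 else mu (i : ℕ)))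
      else 0)
    (B : Matrix (Fin S) (Fin S) ℝ)
    (hB : ∀ i j : Fin S, B i j = A i.succ j.succ - A i.succ 0)
    (T : Matrix (Fin S) (Fin S) ℝ)
    (hT : ∀ i j : Fin S, T i j = if i ≤ j then 1 else 0) :
    (∀ i j : Fin S, i ≠ j → 0 ≤ (T * B * T⁻¹) i j) ∧
    (∀ i j : Fin S,
      Relation.ReflTransGen (fun p q => p ≠ q ∧ (T * B * T⁻¹) p q ≠ 0) i j) := by
  have hBn := Stmt9Aux.B_eq_Bn S a mu A hA B hB
  have hE := Stmt9Aux.entry_formula S a mu B T hBn hT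
  have hamono' := Stmt9Aux.amono a hamono
  constructor
  · intro i j hne
    rw [hE i j]
    rcases lt_trichotomy (i:ℕ) (j:ℕ) with h | h | h
    · by_cases h2 : (j:ℕ) = (i:ℕ) + 1
      · rw [show (i:ℕ) = (j:ℕ) - 1 by omega,
          Stmt9Aux.sum_mid S a mu (j:ℕ) (by omega) j.2]
        exact le_of_lt (hmu _ (by omega) (by omega))
      · rw [Stmt9Aux.sum_far S a mu (i:ℕ) (j:ℕ) (by omega) j.2]
    · exact absurd (Fin.ext h) hne
    · rw [Stmt9Aux.telescope S a mu (j:ℕ) (i:ℕ) (by omega) (le_of_lt i.2)]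
      have := hamono' ((i:ℕ) - (j:ℕ)) (S - (j:ℕ)) (by omega) (by have := i.2; omega)
      linarith
  · have edge_up : ∀ p q : Fin S, (q:ℕ) = (p:ℕ) + 1 →
        (p ≠ q ∧ (T * B * T⁻¹) p q ≠ 0) := by
      intro p q hpq
      refine ⟨fun hc => by rw [hc] at hpq; omega, ?_⟩
      rw [hE p q, show (p:ℕ) = (q:ℕ) - 1 by omega,
        Stmt9Aux.sum_mid S a mu (q:ℕ) (by omega) q.2]
      exact ne_of_gt (hmu _ (by omega) (by have := q.2; omega))
    have edge_down : ∀ p q : Fin S, (p:ℕ) = (q:ℕ) + 1 →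
        (p ≠ q ∧ (T * B * T⁻¹) p q ≠ 0) := by
      intro p q hpq
      refine ⟨fun hc => by rw [hc] at hpq; omega, ?_⟩
      rw [hE p q, Stmt9Aux.telescope S a mu (q:ℕ) (p:ℕ) (by omega) (le_of_lt p.2),
        show (p:ℕ) - (q:ℕ) = 1 by omega]
      have h2 : 2 ≤ S - (q:ℕ) := by have := p.2; omega
      have h3 : a (S - (q:ℕ)) ≤ a 2 := hamono' 2 (S - (q:ℕ)) (by omega) h2
      have h4 : (0:ℝ) < a 1 - a (S - (q:ℕ)) := by linarith
      exact ne_of_gt h4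
    have up : ∀ (d : ℕ) (p q : Fin S), (q:ℕ) = (p:ℕ) + d →
        Relation.ReflTransGen (fun p q : Fin S => p ≠ q ∧ (T * B * T⁻¹) p q ≠ 0) p q := by
      intro d
      induction d with
      | zero =>
        intro p q h
        have hpq : p = q := Fin.ext (by omega)
        rw [hpq]
      | succ n ih =>
        intro p q h
        have hm : (p:ℕ) + n < S := by have := q.2; omega
        refine Relation.ReflTransGen.tail (ih p ⟨(p:ℕ) + n, hm⟩ rfl) (edge_up _ q ?_)
        have hv : ((⟨(p:ℕ) + n, hm⟩ : Fin S) : ℕ) = (p:ℕ) + n := rfl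
        omega
    have down : ∀ (d : ℕ) (p q : Fin S), (p:ℕ) = (q:ℕ) + d →
        Relation.ReflTransGen (fun p q : Fin S => p ≠ q ∧ (T * B * T⁻¹) p q ≠ 0) p q := by
      intro d
      induction d with
      | zero =>
        intro p q h
        have hpq : p = q := Fin.ext (by omega)
        rw [hpq]
      | succ n ih =>
        intro p q h
        have hm : (q:ℕ) + n < S := by have := p.2; omega
        refine Relation.ReflTransGen.head (edge_down p ⟨(q:ℕ) + n, hm⟩ ?_)
          (ih ⟨(q:ℕ) + n, hm⟩ q rfl)
        have hv : ((⟨(q:ℕ) + n, hm⟩ : Fin S) : ℕ) = (q:ℕ) + n := rfl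
        omega
    intro i j
    rcases le_or_gt (i:ℕ) (j:ℕ) with h | h
    · exact up ((j:ℕ) - (i:ℕ)) i j (by omega)
    · exact down ((i:ℕ) - (j:ℕ)) i j (by omega)
end
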